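/- Fix k ≥ 1 and constants b, ε, α, R > 0. For all real symmetric matrices D, D' ∈ ℝ^{k×k} with zero diagonal and all entries in [0,R], the vectors of eigenvalues of the kernel matrices, listed in nonincreasing order, satisfy ‖λ(K(D)) − λ(K(D'))‖₂ ≤ (R/(b²+ε)) · ‖D − D'‖_F, where ‖·‖₂ is the Euclidean norm on ℝ^k and ‖·‖_F the Frobenius norm on k×k matrices. -/

import Mathlib

open Matrix Finset



/-- Gaussian matrix `G(D)_{ij} = exp(−D_{ij}²/(2(b²+ε)))`. -/
noncomputable def gaussMat (b ε : ℝ) {k : ℕ} (D : Matrix (Fin k) (Fin k) ℝ) :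
    Matrix (Fin k) (Fin k) ℝ :=
  Matrix.of fun i j => Real.exp (-(D i j) ^ 2 / (2 * (b ^ 2 + ε)))

/-- Kernel matrix `K(D)_{ij} = exp(−D_{ij}²/(2(b²+ε))) + α·𝟙[i=j]`. -/
noncomputable def kerMat (b ε α : ℝ) {k : ℕ} (D : Matrix (Fin k) (Fin k) ℝ) :
    Matrix (Fin k) (Fin k) ℝ :=
  Matrix.of fun i j => Real.exp (-(D i j) ^ 2 / (2 * (b ^ 2 + ε))) + if i = j then α else 0

/-- Frobenius norm of a k×k real matrix. -/
noncomputable def frobNorm {k : ℕ} (M : Matrix (Fin k) (Fin k) ℝ) : ℝ :=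
  Real.sqrt (∑ i, ∑ j, M i j ^ 2)

/-- `EigenWD(D) = ‖λ‖_p / ‖λ‖₂` computed on the eigenvalues of the kernel matrix `K(D)`. -/
noncomputable def EigenWD (p : ℝ) {k : ℕ} {M : Matrix (Fin k) (Fin k) ℝ}
    (hM : M.IsHermitian) : ℝ :=
  (∑ i, |hM.eigenvalues i| ^ p) ^ (1 / p) / Real.sqrt (∑ i, hM.eigenvalues i ^ 2)


lemma spectral_entry {k : ℕ} {A : Matrix (Fin k) (Fin k) ℝ} (hA : A.IsHermitian) (i j : Fin k) :
    A i j = ∑ p, hA.eigenvalues p *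
      ((hA.eigenvectorUnitary : Matrix (Fin k) (Fin k) ℝ) i p *
       (hA.eigenvectorUnitary : Matrix (Fin k) (Fin k) ℝ) j p) := by
  conv_lhs => rw [hA.spectral_theorem]
  simp only [Unitary.conjStarAlgAut_apply, Matrix.mul_apply, Matrix.diagonal_apply, Matrix.star_apply, star_trivial,
    Function.comp_apply, RCLike.ofReal_real_eq_id, id_eq, Finset.sum_mul, mul_ite, mul_zero]
  rw [Finset.sum_comm]
  refine Finset.sum_congr rfl fun p _ => ?_
  simp [Finset.sum_ite_eq, mul_comm, mul_assoc, mul_left_comm]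

lemma sum4_swap {k : ℕ} (f : Fin k → Fin k → Fin k → Fin k → ℝ) :
    ∑ i, ∑ j, ∑ p, ∑ q, f i j p q = ∑ p, ∑ q, ∑ i, ∑ j, f i j p q :=
  calc ∑ i, ∑ j, ∑ p, ∑ q, f i j p q
      = ∑ i, ∑ p, ∑ j, ∑ q, f i j p q :=
        Finset.sum_congr rfl fun _ _ => Finset.sum_comm
    _ = ∑ p, ∑ i, ∑ j, ∑ q, f i j p q := Finset.sum_comm
    _ = ∑ p, ∑ i, ∑ q, ∑ j, f i j p q :=
        Finset.sum_congr rfl fun _ _ => Finset.sum_congr rfl fun _ _ => Finset.sum_comm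
    _ = ∑ p, ∑ q, ∑ i, ∑ j, f i j p q :=
        Finset.sum_congr rfl fun _ _ => Finset.sum_comm

lemma trace_form {k : ℕ} {A B : Matrix (Fin k) (Fin k) ℝ}
    (hA : A.IsHermitian) (hB : B.IsHermitian) :
    ∑ i, ∑ j, A i j * B i j
      = ∑ p, ∑ q, hA.eigenvalues p * hB.eigenvalues q *
        (∑ i, (hA.eigenvectorUnitary : Matrix (Fin k) (Fin k) ℝ) i p *
              (hB.eigenvectorUnitary : Matrix (Fin k) (Fin k) ℝ) i q) ^ 2 := by
  set U := (hA.eigenvectorUnitary : Matrix (Fin k) (Fin k) ℝ)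
  set V := (hB.eigenvectorUnitary : Matrix (Fin k) (Fin k) ℝ)
  have key : ∀ p q, hA.eigenvalues p * hB.eigenvalues q * (∑ i, U i p * V i q) ^ 2
      = ∑ i, ∑ j, (hA.eigenvalues p * (U i p * U j p)) * (hB.eigenvalues q * (V i q * V j q)) := by
    intro p q
    rw [sq, Finset.sum_mul_sum, Finset.mul_sum]
    refine Finset.sum_congr rfl fun i _ => ?_
    rw [Finset.mul_sum]
    exact Finset.sum_congr rfl fun j _ => by ring
  simp_rw [key]
  simp_rw [spectral_entry hA, spectral_entry hB, Finset.sum_mul_sum]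
  exact sum4_swap _

/-- the "overlap" matrix `W = Uᵀ V` is orthogonal in the entrywise sense. -/
lemma overlap_row_col {k : ℕ} {A B : Matrix (Fin k) (Fin k) ℝ}
    (hA : A.IsHermitian) (hB : B.IsHermitian) :
    (∀ p, ∑ q, (∑ i, (hA.eigenvectorUnitary : Matrix (Fin k) (Fin k) ℝ) i p *
              (hB.eigenvectorUnitary : Matrix (Fin k) (Fin k) ℝ) i q) ^ 2 = 1) ∧
    (∀ q, ∑ p, (∑ i, (hA.eigenvectorUnitary : Matrix (Fin k) (Fin k) ℝ) i p *
              (hB.eigenvectorUnitary : Matrix (Fin k) (Fin k) ℝ) i q) ^ 2 = 1) := by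
  set U := (hA.eigenvectorUnitary : Matrix (Fin k) (Fin k) ℝ) with hU
  set V := (hB.eigenvectorUnitary : Matrix (Fin k) (Fin k) ℝ) with hV
  have hUmem : U ∈ Matrix.unitaryGroup (Fin k) ℝ := hA.eigenvectorUnitary.2
  have hVmem : V ∈ Matrix.unitaryGroup (Fin k) ℝ := hB.eigenvectorUnitary.2
  set W : Matrix (Fin k) (Fin k) ℝ := star U * V with hWdef
  have hWent : ∀ p q, W p q = ∑ i, U i p * V i q := by
    intro p q
    simp [hWdef, Matrix.mul_apply, Matrix.star_apply]
  have hW1 : W * star W = 1 := by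
    have : star W = star V * U := by simp [hWdef]
    rw [this, hWdef, mul_assoc, ← mul_assoc V, Matrix.mem_unitaryGroup_iff.mp hVmem, one_mul,
      Matrix.mem_unitaryGroup_iff'.mp hUmem]
  have hW2 : star W * W = 1 := by
    have : star W = star V * U := by simp [hWdef]
    rw [this, hWdef, mul_assoc, ← mul_assoc U, Matrix.mem_unitaryGroup_iff.mp hUmem, one_mul,
      Matrix.mem_unitaryGroup_iff'.mp hVmem]
  constructor
  · intro p
    have := congrFun (congrFun hW1 p) p
    simp only [Matrix.mul_apply, Matrix.star_apply, star_trivial, Matrix.one_apply_eq] at this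
    simp_rw [← hWent, sq]
    exact this
  · intro q
    have := congrFun (congrFun hW2 q) q
    simp only [Matrix.mul_apply, Matrix.star_apply, star_trivial, Matrix.one_apply_eq] at this
    simp_rw [← hWent, sq]
    exact this
section
variable {k : ℕ}

lemma sum3_swap {α β γ : Type*} [Fintype α] [Fintype β] [Fintype γ] (f : α → β → γ → ℝ) :
    ∑ a, ∑ b, ∑ c, f a b c = ∑ c, ∑ a, ∑ b, f a b c :=
  calc ∑ a, ∑ b, ∑ c, f a b c = ∑ a, ∑ c, ∑ b, f a b c :=
        Finset.sum_congr rfl fun _ _ => Finset.sum_comm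
    _ = ∑ c, ∑ a, ∑ b, f a b c := Finset.sum_comm

lemma hoffman_wielandt {k : ℕ} {A B : Matrix (Fin k) (Fin k) ℝ}
    (hA : A.IsHermitian) (hB : B.IsHermitian)
    {μ μ' : Fin k → ℝ} (hμ : Antitone μ) (hμ' : Antitone μ')
    {e e' : Equiv.Perm (Fin k)}
    (hμe : μ = hA.eigenvalues ∘ e) (hμ'e : μ' = hB.eigenvalues ∘ e') :
    ∑ i, (μ i - μ' i) ^ 2 ≤ ∑ i, ∑ j, (A i j - B i j) ^ 2 := by
  set U := (hA.eigenvectorUnitary : Matrix (Fin k) (Fin k) ℝ) with hU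
  set V := (hB.eigenvectorUnitary : Matrix (Fin k) (Fin k) ℝ) with hV
  set lA := hA.eigenvalues with hlA
  set lB := hB.eigenvalues with hlB
  obtain ⟨hrow, hcol⟩ := overlap_row_col hA hB
  -- squared traces
  have hdelta : ∀ {C : Matrix (Fin k) (Fin k) ℝ} (hC : C.IsHermitian) (p q : Fin k),
      (∑ i, (hC.eigenvectorUnitary : Matrix (Fin k) (Fin k) ℝ) i p *
            (hC.eigenvectorUnitary : Matrix (Fin k) (Fin k) ℝ) i q)
        = if p = q then 1 else 0 := by
    intro C hC p q
    have hUU : star (hC.eigenvectorUnitary : Matrix (Fin k) (Fin k) ℝ) *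
        (hC.eigenvectorUnitary : Matrix (Fin k) (Fin k) ℝ) = 1 :=
      Matrix.mem_unitaryGroup_iff'.mp hC.eigenvectorUnitary.2
    have := congrFun (congrFun hUU p) q
    simpa [Matrix.mul_apply, Matrix.star_apply, Matrix.one_apply] using this
  have hsq : ∀ {C : Matrix (Fin k) (Fin k) ℝ} (hC : C.IsHermitian),
      ∑ i, ∑ j, C i j * C i j = ∑ p, hC.eigenvalues p ^ 2 := by
    intro C hC
    rw [trace_form hC hC]
    simp_rw [hdelta hC]
    simp [apply_ite (fun x : ℝ => x ^ 2), mul_ite, Finset.sum_ite_eq, sq]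
  -- the doubly stochastic matrix
  set T : Matrix (Fin k) (Fin k) ℝ :=
    Matrix.of (fun p q => (∑ i, U i (e p) * V i (e' q)) ^ 2) with hTdef
  have hTapp : ∀ p q, T p q = (∑ i, U i (e p) * V i (e' q)) ^ 2 := fun p q => rfl
  have hTmem : T ∈ doublyStochastic ℝ (Fin k) := by
    rw [mem_doublyStochastic_iff_sum]
    refine ⟨fun i j => by rw [hTapp]; positivity, fun p => ?_, fun q => ?_⟩
    · rw [show ∑ q, T p q = ∑ q, (∑ i, U i (e p) * V i (e' q)) ^ 2 from rfl,
        Equiv.sum_comp e' (fun q => (∑ i, U i (e p) * V i q) ^ 2)]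
      exact hrow (e p)
    · rw [show ∑ p, T p q = ∑ p, (∑ i, U i (e p) * V i (e' q)) ^ 2 from rfl,
        Equiv.sum_comp e (fun p => (∑ i, U i p * V i (e' q)) ^ 2)]
      exact hcol (e' q)
  -- cross term equals the weighted sum
  have hcross : ∑ i, ∑ j, A i j * B i j = ∑ p, ∑ q, μ p * μ' q * T p q := by
    rw [trace_form hA hB]
    rw [← Equiv.sum_comp e (fun p => ∑ q, lA p * lB q * (∑ i, U i p * V i q) ^ 2)]
    refine Finset.sum_congr rfl fun p _ => ?_
    rw [← Equiv.sum_comp e' (fun q => lA (e p) * lB q * (∑ i, U i (e p) * V i q) ^ 2)]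
    refine Finset.sum_congr rfl fun q _ => ?_
    rw [hTapp, hμe, hμ'e]
    rfl
  -- Birkhoff + rearrangement
  obtain ⟨w, hw0, hw1, hwT⟩ := exists_eq_sum_perm_of_mem_doublyStochastic hTmem
  have hTent : ∀ p q, T p q = ∑ σ : Equiv.Perm (Fin k), w σ * (σ.permMatrix ℝ p q) := by
    intro p q
    have := congrFun (congrFun hwT p) q
    rw [← this]
    simp [Matrix.sum_apply, Matrix.smul_apply, smul_eq_mul]
  have hperm : ∀ (σ : Equiv.Perm (Fin k)) p q,
      σ.permMatrix ℝ p q = if q = σ p then 1 else 0 := by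
    intro σ p q
    simp [Equiv.Perm.permMatrix, PEquiv.toMatrix_apply, Equiv.toPEquiv_apply, eq_comm]
  have hmono : Monovary μ μ' := hμ.monovary hμ'
  have hbound : ∑ p, ∑ q, μ p * μ' q * T p q ≤ ∑ p, μ p * μ' p := by
    simp_rw [hTent, Finset.mul_sum]
    rw [sum3_swap (fun p q σ => μ p * μ' q * (w σ * σ.permMatrix ℝ p q))]
    have hinner : ∀ σ : Equiv.Perm (Fin k),
        ∑ p, ∑ q, μ p * μ' q * (w σ * σ.permMatrix ℝ p q) = w σ * ∑ p, μ p * μ' (σ p) := by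
      intro σ
      rw [Finset.mul_sum]
      refine Finset.sum_congr rfl fun p _ => ?_
      simp only [hperm σ p, mul_ite, mul_one, mul_zero, Finset.sum_ite_eq', Finset.mem_univ,
        if_true]
      ring
    simp_rw [hinner]
    calc ∑ σ : Equiv.Perm (Fin k), w σ * ∑ p, μ p * μ' (σ p)
        ≤ ∑ σ : Equiv.Perm (Fin k), w σ * ∑ p, μ p * μ' p := by
          refine Finset.sum_le_sum fun σ _ => mul_le_mul_of_nonneg_left ?_ (hw0 σ)
          simpa [smul_eq_mul] using hmono.sum_smul_comp_perm_le_sum_smul (σ := σ)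
      _ = ∑ p, μ p * μ' p := by rw [← Finset.sum_mul, hw1, one_mul]
  -- eigenvalue sums of squares
  have hμsq : ∑ i, μ i ^ 2 = ∑ p, lA p ^ 2 := by
    rw [hμe, ← Equiv.sum_comp e (fun p => lA p ^ 2)]
    rfl
  have hμ'sq : ∑ i, μ' i ^ 2 = ∑ p, lB p ^ 2 := by
    rw [hμ'e, ← Equiv.sum_comp e' (fun p => lB p ^ 2)]
    rfl
  -- expansions
  have expandL : ∑ i, (μ i - μ' i) ^ 2
      = ∑ i, μ i ^ 2 + ∑ i, μ' i ^ 2 - 2 * ∑ i, μ i * μ' i := by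
    rw [← Finset.sum_add_distrib, Finset.mul_sum, ← Finset.sum_sub_distrib]
    exact Finset.sum_congr rfl fun i _ => by ring
  have expandR : ∑ i, ∑ j, (A i j - B i j) ^ 2
      = ∑ i, ∑ j, A i j * A i j + ∑ i, ∑ j, B i j * B i j - 2 * ∑ i, ∑ j, A i j * B i j := by
    rw [← Finset.sum_add_distrib, Finset.mul_sum, ← Finset.sum_sub_distrib]
    refine Finset.sum_congr rfl fun i _ => ?_
    rw [← Finset.sum_add_distrib, Finset.mul_sum, ← Finset.sum_sub_distrib]
    exact Finset.sum_congr rfl fun j _ => by ring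
  have h1 := hsq hA
  have h2 := hsq hB
  rw [expandL, expandR, h1, h2, ← hlA, ← hlB, hcross, ← hμsq, ← hμ'sq]
  linarith [hbound]
end


lemma exp_neg_lip {s t : ℝ} (hs : 0 ≤ s) (ht : 0 ≤ t) :
    |Real.exp (-s) - Real.exp (-t)| ≤ |s - t| := by
  have key : ∀ u v : ℝ, 0 ≤ u → 0 ≤ v → v ≤ u →
      Real.exp (-v) - Real.exp (-u) ≤ u - v := by
    intro u v hu hv huv
    have h1 : Real.exp (-v) ≤ 1 := Real.exp_le_one_iff.mpr (by linarith)
    have h2 : -(u - v) + 1 ≤ Real.exp (-(u - v)) := Real.add_one_le_exp _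
    have h3 : Real.exp (-u) = Real.exp (-v) * Real.exp (-(u - v)) := by
      rw [← Real.exp_add]; ring_nf
    nlinarith [Real.exp_pos (-(u - v)), Real.exp_pos (-v)]
  rcases le_total t s with h | h
  · rw [abs_of_nonpos (by nlinarith [Real.exp_le_exp.mpr (neg_le_neg h)]), abs_of_nonneg (by linarith)]
    linarith [key s t hs ht h]
  · rw [abs_of_nonneg (by nlinarith [Real.exp_le_exp.mpr (neg_le_neg h)]), abs_of_nonpos (by linarith)]
    linarith [key t s ht hs h]

lemma gauss_entry_lip {c R x y : ℝ} (hc : 0 < c) (hx : x ∈ Set.Icc 0 R) (hy : y ∈ Set.Icc 0 R) :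
    |Real.exp (-x ^ 2 / (2 * c)) - Real.exp (-y ^ 2 / (2 * c))| ≤ R / c * |x - y| := by
  obtain ⟨hx0, hxR⟩ := hx
  obtain ⟨hy0, hyR⟩ := hy
  have h1 : -x ^ 2 / (2 * c) = -(x ^ 2 / (2 * c)) := by ring
  have h2 : -y ^ 2 / (2 * c) = -(y ^ 2 / (2 * c)) := by ring
  rw [h1, h2]
  have hle := exp_neg_lip (s := x ^ 2 / (2 * c)) (t := y ^ 2 / (2 * c))
    (by positivity) (by positivity)
  refine hle.trans ?_
  have : x ^ 2 / (2 * c) - y ^ 2 / (2 * c) = (x - y) * ((x + y) / (2 * c)) := by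
    field_simp; ring
  rw [this, abs_mul]
  have habs : |(x + y) / (2 * c)| = (x + y) / (2 * c) := abs_of_nonneg (by positivity)
  rw [mul_comm]
  gcongr ?_ * _
  rw [habs]
  rw [div_le_div_iff₀ (by positivity) hc]
  nlinarith

/-- Hoffman–Wielandt-type bound: the nonincreasingly sorted eigenvalue vectors of the
kernel matrices satisfy `‖λ(K(D)) − λ(K(D'))‖₂ ≤ (R/(b²+ε))·‖D − D'‖_F`. -/
theorem kerMat_eigenvalue_stability (k : ℕ) (hk : 1 ≤ k) (b ε α R : ℝ)
    (hb : 0 < b) (hε : 0 < ε) (hα : 0 < α) (hR : 0 < R)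
    (D D' : Matrix (Fin k) (Fin k) ℝ)
    (hDs : D.IsSymm) (hDs' : D'.IsSymm)
    (hDd : ∀ i, D i i = 0) (hDd' : ∀ i, D' i i = 0)
    (hDR : ∀ i j, D i j ∈ Set.Icc 0 R) (hDR' : ∀ i j, D' i j ∈ Set.Icc 0 R)
    (hKD : (kerMat b ε α D).IsHermitian) (hKD' : (kerMat b ε α D').IsHermitian)
    (μ μ' : Fin k → ℝ)
    (hμ_sorted : Antitone μ) (hμ'_sorted : Antitone μ')
    (hμ_eig : ∃ e : Equiv.Perm (Fin k), μ = hKD.eigenvalues ∘ e)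
    (hμ'_eig : ∃ e : Equiv.Perm (Fin k), μ' = hKD'.eigenvalues ∘ e) :
    Real.sqrt (∑ i, (μ i - μ' i) ^ 2) ≤ (R / (b ^ 2 + ε)) * frobNorm (D - D') := by
  obtain ⟨e, he⟩ := hμ_eig
  obtain ⟨e', he'⟩ := hμ'_eig
  have HW := hoffman_wielandt hKD hKD' hμ_sorted hμ'_sorted he he'
  set c := b ^ 2 + ε with hc
  have hc0 : 0 < c := by positivity
  have hdiff : ∀ i j, kerMat b ε α D i j - kerMat b ε α D' i j
      = Real.exp (-(D i j) ^ 2 / (2 * c)) - Real.exp (-(D' i j) ^ 2 / (2 * c)) := by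
    intro i j
    simp only [kerMat, Matrix.of_apply]
    ring
  have hRc0 : 0 ≤ R / c := by positivity
  have hstep : ∑ i, ∑ j, (kerMat b ε α D i j - kerMat b ε α D' i j) ^ 2
      ≤ (R / c) ^ 2 * ∑ i, ∑ j, (D i j - D' i j) ^ 2 := by
    rw [Finset.mul_sum]
    refine Finset.sum_le_sum fun i _ => ?_
    rw [Finset.mul_sum]
    refine Finset.sum_le_sum fun j _ => ?_
    rw [hdiff i j]
    have hlip := gauss_entry_lip hc0 (hDR i j) (hDR' i j)
    calc (Real.exp (-(D i j) ^ 2 / (2 * c)) - Real.exp (-(D' i j) ^ 2 / (2 * c))) ^ 2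
        = |Real.exp (-(D i j) ^ 2 / (2 * c)) - Real.exp (-(D' i j) ^ 2 / (2 * c))| ^ 2 := by
          rw [sq_abs]
      _ ≤ (R / c * |D i j - D' i j|) ^ 2 := by
          have := sq_abs (Real.exp (-D i j ^ 2 / (2 * c)) - Real.exp (-D' i j ^ 2 / (2 * c)))
          nlinarith [abs_nonneg (Real.exp (-D i j ^ 2 / (2 * c)) - Real.exp (-D' i j ^ 2 / (2 * c))), abs_nonneg (D i j - D' i j), hRc0]
      _ = (R / c) ^ 2 * (D i j - D' i j) ^ 2 := by rw [mul_pow, sq_abs]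
  have hfinal : ∑ i, (μ i - μ' i) ^ 2 ≤ (R / c) ^ 2 * ∑ i, ∑ j, (D i j - D' i j) ^ 2 :=
    HW.trans hstep
  have hRc : 0 ≤ R / c := by positivity
  calc Real.sqrt (∑ i, (μ i - μ' i) ^ 2)
      ≤ Real.sqrt ((R / c) ^ 2 * ∑ i, ∑ j, (D i j - D' i j) ^ 2) :=
        Real.sqrt_le_sqrt hfinal
    _ = (R / c) * Real.sqrt (∑ i, ∑ j, (D i j - D' i j) ^ 2) := by
        rw [Real.sqrt_mul (by positivity), Real.sqrt_sq hRc]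
    _ = (R / c) * frobNorm (D - D') := by
        rw [frobNorm]
        simp [Matrix.sub_apply]
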